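/- Let G be a k-connected graph on n vertices with k ≥ n/3. Then every two longest paths in G intersect in at least k vertices. -/

import Mathlib

/-!
The endpoints `u, v` of a longest path `P = x₀ … x_L` have all their neighbours on `P`, and
a `k`-connected graph has minimum degree at least `k`. If for some `i` both `u ~ xᵢ₊₁` and
`v ~ xᵢ`, then `P` closes up into a cycle through all its vertices; a vertex off this cycle
adjacent to it would give a path longer than `P`, so by connectivity `P` is Hamiltonian.
Otherwise the index sets `{i | u ~ xᵢ₊₁}` and `{i | v ~ xᵢ}` are disjoint subsets of
`{0, …, L - 1}` of size at least `k` each, so `L ≥ 2k`. Either way two longest paths have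
`L + 1` vertices each and hence share at least `2(L + 1) - n ≥ k` of them when `n ≤ 3k`.
-/

/-- A graph is `k`-connected if it has more than `k` vertices and deleting any set of
fewer than `k` vertices leaves a connected graph. -/
def KConnected {V : Type*} [Fintype V] (G : SimpleGraph V) (k : ℕ) : Prop :=
  k < Fintype.card V ∧
    ∀ S : Set V, S.ncard < k → (G.induce Sᶜ).Connected

lemma KConnected.le_ncard_neighborSet {V : Type*} [Fintype V] {G : SimpleGraph V} {k : ℕ}
    (hconn : KConnected G k) (v : V) : k ≤ (G.neighborSet v).ncard := by
  by_contra! hlt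
  have hv : v ∈ (G.neighborSet v)ᶜ := G.irrefl
  have : Nontrivial ((G.neighborSet v)ᶜ : Set V) := by
    rw [Set.nontrivial_coe_sort, ← Set.one_lt_ncard_iff_nontrivial]
    have := Set.ncard_add_ncard_compl (G.neighborSet v)
    have := hconn.1
    rw [Nat.card_eq_fintype_card] at *
    omega
  obtain ⟨w, hw⟩ := (hconn.2 _ hlt).preconnected.exists_adj_of_nontrivial ⟨v, hv⟩
  exact w.2 hw

lemma KConnected.connected {V : Type*} [Fintype V] {G : SimpleGraph V} {k : ℕ}
    (hconn : KConnected G k) (hk : 0 < k) : G.Connected := by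
  have h := hconn.2 ∅ (by simpa using hk)
  rw [Set.compl_empty] at h
  exact (SimpleGraph.induceUnivIso G).connected_iff.mp h

lemma Set.ncard_add_ncard_le_card_add_ncard_inter {α : Type*} [Finite α] (s t : Set α) :
    s.ncard + t.ncard ≤ Nat.card α + (s ∩ t).ncard := by
  rw [← Set.ncard_union_add_ncard_inter s t]
  exact Nat.add_le_add_right (Set.ncard_le_card _) _

lemma Set.ncard_le_ncard_of_subset_image {α β : Type*} {s : Set α} {t : Set β} {f : β → α}
    (ht : t.Finite) (h : s ⊆ f '' t) : s.ncard ≤ t.ncard :=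
  (Set.ncard_le_ncard h (ht.image f)).trans (Set.ncard_image_le ht)

namespace SimpleGraph.Walk

variable {V : Type*} {G : SimpleGraph V} {u v : V}

def IsLongestPath (P : G.Walk u v) : Prop :=
  P.IsPath ∧ ∀ (a b : V) (W : G.Walk a b), W.IsPath → W.length ≤ P.length

lemma IsPath.ncard_support {P : G.Walk u v} (hP : P.IsPath) :
    {x | x ∈ P.support}.ncard = P.length + 1 := by
  classical
  have : {x | x ∈ P.support} = ↑P.support.toFinset := by ext; simp
  rw [this, Set.ncard_coe_finset, List.toFinset_card_of_nodup hP.support_nodup, length_support]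

lemma exists_getVert_succ_eq (P : G.Walk u v) {w : V} (hw : w ∈ P.support) (hwu : w ≠ u) :
    ∃ i < P.length, P.getVert (i + 1) = w := by
  obtain ⟨j, rfl, hj⟩ := mem_support_iff_exists_getVert.mp hw
  obtain ⟨i, rfl⟩ : ∃ i, j = i + 1 :=
    Nat.exists_eq_add_one.mpr (Nat.pos_of_ne_zero fun h => hwu (by simp [h]))
  exact ⟨i, by omega, rfl⟩

lemma exists_getVert_eq (P : G.Walk u v) {w : V} (hw : w ∈ P.support) (hwv : w ≠ v) :
    ∃ i < P.length, P.getVert i = w := by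
  obtain ⟨i, rfl, hi⟩ := mem_support_iff_exists_getVert.mp hw
  exact ⟨i, lt_of_le_of_ne hi fun h => hwv (by simp [h]), rfl⟩

lemma exists_isPath_length_eq_of_adj {c : G.Walk v v} (hc : c.support.tail.Nodup)
    (hnil : ¬c.Nil) {w x : V} (hw : w ∉ c.support) (hx : x ∈ c.support) (hwx : G.Adj w x) :
    ∃ (a : V) (W : G.Walk w a), W.IsPath ∧ W.length = c.length := by
  classical
  set c' := c.rotate x hx
  have hnil' : ¬c'.Nil := by rwa [nil_rotate]
  have hpath : c'.tail.IsPath := by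
    rw [isPath_def, support_tail_of_not_nil _ hnil']
    exact (support_rotate c x hx).nodup_iff.mpr hc
  have hw' : w ∉ c'.tail.reverse.support := by
    rw [support_reverse, List.mem_reverse, support_tail_of_not_nil _ hnil']
    exact fun h => hw ((mem_support_rotate_iff ..).mp (List.mem_of_mem_tail h))
  refine ⟨_, cons hwx c'.tail.reverse, (cons_isPath_iff _ _).mpr ⟨hpath.reverse, hw'⟩, ?_⟩
  rw [length_cons, length_reverse, length_tail_add_one hnil', length_rotate]

/-- The cycle `xᵢ₊₁ x₀ x₁ … xᵢ x_L x_{L-1} … xᵢ₊₁` through the vertices of `P = x₀ … x_L`. -/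
lemma IsPath.exists_closed_walk_of_crossing {P : G.Walk u v} (hP : P.IsPath) {i : ℕ}
    (hi : i < P.length) (h₁ : G.Adj u (P.getVert (i + 1))) (h₂ : G.Adj v (P.getVert i)) :
    ∃ (y : V) (c : G.Walk y y), c.support.tail.Nodup ∧ c.length = P.length + 1 ∧
      ∀ x, x ∈ c.support ↔ x ∈ P.support := by
  let c := cons h₁.symm ((P.take i).append (cons h₂.symm (P.drop (i + 1)).reverse))
  have htail : c.support.tail.Perm P.support := by
    have : c.support.tail = P.support.take (i + 1) ++ (P.support.drop (i + 1)).reverse := by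
      simp [c, support_append, support_take, support_reverse, Nat.min_eq_left hi]
    rw [this]
    exact ((List.reverse_perm _).append_left _).trans (by rw [List.take_append_drop])
  refine ⟨_, c, htail.nodup_iff.mpr hP.support_nodup, ?_, fun x => ?_⟩
  · simp only [c, length_cons, length_append, take_length, length_reverse, drop_length]
    omega
  · rw [← cons_tail_support, List.mem_cons, htail.mem_iff]
    exact or_iff_right_of_imp fun h => h ▸ P.getVert_mem_support _

lemma two_mul_le_length_of_not_crossing {P : G.Walk u v} {k : ℕ}
    (hu : k ≤ (G.neighborSet u).ncard) (hv : k ≤ (G.neighborSet v).ncard)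
    (hNu : G.neighborSet u ⊆ {x | x ∈ P.support})
    (hNv : G.neighborSet v ⊆ {x | x ∈ P.support})
    (hcross : ∀ i < P.length, G.Adj u (P.getVert (i + 1)) → ¬G.Adj v (P.getVert i)) :
    2 * k ≤ P.length := by
  set A := {i | i < P.length ∧ G.Adj u (P.getVert (i + 1))}
  set B := {i | i < P.length ∧ G.Adj v (P.getVert i)}
  have hAB : A ∪ B ⊆ Set.Iio P.length := Set.union_subset (fun _ h => h.1) (fun _ h => h.1)
  have hAfin : A.Finite := (Set.finite_Iio _).subset fun _ h => h.1
  have hBfin : B.Finite := (Set.finite_Iio _).subset fun _ h => h.1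
  have hA : k ≤ A.ncard := by
    refine hu.trans (Set.ncard_le_ncard_of_subset_image (f := fun i => P.getVert (i + 1)) hAfin ?_)
    intro w hw
    obtain ⟨i, hi, rfl⟩ := P.exists_getVert_succ_eq (hNu hw) (G.ne_of_adj hw).symm
    exact ⟨i, ⟨hi, hw⟩, rfl⟩
  have hB : k ≤ B.ncard := by
    refine hv.trans (Set.ncard_le_ncard_of_subset_image (f := P.getVert) hBfin ?_)
    intro w hw
    obtain ⟨i, hi, rfl⟩ := P.exists_getVert_eq (hNv hw) (G.ne_of_adj hw).symm
    exact ⟨i, ⟨hi, hw⟩, rfl⟩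
  have hdisj : Disjoint A B :=
    Set.disjoint_left.mpr fun i hA hB => hcross i hA.1 hA.2 hB.2
  calc 2 * k ≤ A.ncard + B.ncard := by omega
    _ = (A ∪ B).ncard := (Set.ncard_union_eq hdisj hAfin hBfin).symm
    _ ≤ (Set.Iio P.length).ncard := Set.ncard_le_ncard hAB (Set.finite_Iio _)
    _ = P.length := by rw [← Finset.coe_range, Set.ncard_coe_finset, Finset.card_range]

namespace IsLongestPath

variable {P : G.Walk u v}

lemma reverse (hP : P.IsLongestPath) : P.reverse.IsLongestPath :=
  ⟨hP.1.reverse, by simpa using hP.2⟩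

lemma length_eq {a b : V} {Q : G.Walk a b} (hP : P.IsLongestPath) (hQ : Q.IsLongestPath) :
    Q.length = P.length :=
  le_antisymm (hP.2 _ _ _ hQ.1) (hQ.2 _ _ _ hP.1)

lemma mem_support_of_adj_start (hP : P.IsLongestPath) {w : V} (hw : G.Adj u w) :
    w ∈ P.support := by
  by_contra hwP
  have := hP.2 _ _ _ ((cons_isPath_iff hw.symm P).mpr ⟨hP.1, hwP⟩)
  simp at this

lemma mem_support_of_adj_end (hP : P.IsLongestPath) {w : V} (hw : G.Adj v w) :
    w ∈ P.support := by
  simpa using hP.reverse.mem_support_of_adj_start hw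

lemma mem_support_of_crossing (hP : P.IsLongestPath) (hconn : G.Connected) {i : ℕ}
    (hi : i < P.length) (h₁ : G.Adj u (P.getVert (i + 1))) (h₂ : G.Adj v (P.getVert i))
    (x : V) : x ∈ P.support := by
  by_contra hx
  obtain ⟨y, c, hc, hlen, hmem⟩ := hP.1.exists_closed_walk_of_crossing hi h₁ h₂
  obtain ⟨d, -, hd₁, hd₂⟩ := (hconn.preconnected x u).some.exists_boundary_dart
    {z | z ∉ P.support} hx (by simp)
  obtain ⟨a, W, hW, hWlen⟩ := exists_isPath_length_eq_of_adj hc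
    (not_nil_iff_lt_length.mpr (by omega)) (mt (hmem _).mp hd₁)
    ((hmem _).mpr (by simpa using hd₂)) d.adj
  have := hP.2 _ _ W hW
  omega

lemma two_mul_le_length_or_mem_support (hP : P.IsLongestPath) (hconn : G.Connected)
    {k : ℕ} (hdeg : ∀ w, k ≤ (G.neighborSet w).ncard) : 2 * k ≤ P.length ∨ ∀ x, x ∈ P.support := by
  by_cases hcross : ∃ i < P.length, G.Adj u (P.getVert (i + 1)) ∧ G.Adj v (P.getVert i)
  · obtain ⟨i, hi, h₁, h₂⟩ := hcross
    exact .inr (hP.mem_support_of_crossing hconn hi h₁ h₂)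
  · push Not at hcross
    exact .inl (two_mul_le_length_of_not_crossing (hdeg u) (hdeg v)
      (fun _ => hP.mem_support_of_adj_start) (fun _ => hP.mem_support_of_adj_end) hcross)

end IsLongestPath

end SimpleGraph.Walk

/-- Let `G` be a `k`-connected graph on `n` vertices with `k ≥ n/3`.
Then every two longest paths in `G` intersect in at least `k` vertices. -/
theorem stmt_6 {V : Type*} [Fintype V] {G : SimpleGraph V} (k n : ℕ)
    (hn : Fintype.card V = n)
    (hconn : KConnected G k)
    (hk : (n : ℝ) / 3 ≤ (k : ℝ))
    {p₁ p₂ q₁ q₂ : V} (P : G.Walk p₁ p₂) (Q : G.Walk q₁ q₂)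
    (hP : P.IsPath) (hQ : Q.IsPath)
    (hPmax : ∀ (u v : V) (W : G.Walk u v), W.IsPath → W.length ≤ P.length)
    (hQmax : ∀ (u v : V) (W : G.Walk u v), W.IsPath → W.length ≤ Q.length) :
    k ≤ ({x | x ∈ P.support} ∩ {x | x ∈ Q.support}).ncard := by
  rcases Nat.eq_zero_or_pos k with rfl | hk₀
  · exact Nat.zero_le _
  have hPl : P.IsLongestPath := ⟨hP, hPmax⟩
  have hn3 : n ≤ 3 * k := by exact_mod_cast (by linarith : (n : ℝ) ≤ 3 * k)
  have hkn : k < n := hn ▸ hconn.1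
  have hinter := Set.ncard_add_ncard_le_card_add_ncard_inter {x | x ∈ P.support}
    {x | x ∈ Q.support}
  rw [hP.ncard_support, hQ.ncard_support, hPl.length_eq ⟨hQ, hQmax⟩, Nat.card_eq_fintype_card,
    hn] at hinter
  rcases hPl.two_mul_le_length_or_mem_support (hconn.connected hk₀)
    hconn.le_ncard_neighborSet with hlen | hspan
  · omega
  · have : P.length + 1 = n := by
      rw [← hP.ncard_support, Set.eq_univ_of_forall (s := {x | x ∈ P.support}) hspan,
        Set.ncard_univ, Nat.card_eq_fintype_card, hn]
    omega
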